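/- Let K ≥ 1, let X be a nonempty finite set (of first-stage designs), let U be a nonempty finite set (of scenarios), let A : X → U → Set (ℝ^K) assign to each design x and scenario ξ a nonempty finite set A x ξ of achievable objective vectors, and let Q : U → Set (ℝ^K) assign to each scenario a nonempty finite set Q ξ (the scenario's ideal Pareto front). Then the minimum over x ∈ X of the maximum over ξ ∈ U of I(ParetoSet (A x ξ), Q ξ) equals the minimum over x ∈ X and over families of functions s ξ : Q ξ → ℝ^K with s ξ q ∈ A x ξ for all ξ ∈ U and q ∈ Q ξ, of max over ξ ∈ U, q ∈ Q ξ, and i ∈ Fin K of (s ξ q i − q i). (This is the equivalence between the robust flex-hand problem and its reformulation as a single worst-case optimization problem.) -/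

import Mathlib

/-!
Every point of a finite set is weakly dominated by one of its Pareto points, and domination only
lowers the differences `p i - q i`, so replacing `A x ξ` by its Pareto set does not change the
`ε`-indicator. For finite nonempty `P` and `Q`, `I(P, Q)` is the maximum over `q ∈ Q` of the least
excess `max_i (p i - q i)` over `p ∈ P`. A maximum of independent minima is the minimum, over all
selections, of the maximum; applied over `q` and then over `ξ`, and followed by the minimum over
designs, this turns the left-hand side into the minimum of the reformulated problem.
-/

/-- The Pareto set of `S ⊆ ℝ^K`: points of `S` that are minimal under the
componentwise partial order (no other point of `S` strictly dominates them). -/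
def ParetoSet {K : ℕ} (S : Set (Fin K → ℝ)) : Set (Fin K → ℝ) :=
  {p | p ∈ S ∧ ∀ q ∈ S, (∀ i, q i ≤ p i) → q = p}

/-- The additive binary `ε`-indicator `I(P,Q)`: the smallest `ε ∈ ℝ` such that
every `q ∈ Q` is weakly dominated within `ε` by some `p ∈ P`. -/
noncomputable def epsInd {K : ℕ} (P Q : Set (Fin K → ℝ)) : ℝ :=
  sInf {ε : ℝ | ∀ q ∈ Q, ∃ p ∈ P, ∀ i, p i - q i ≤ ε}

open Finset

theorem mem_paretoSet_iff_minimal {K : ℕ} {S : Set (Fin K → ℝ)} {p : Fin K → ℝ} :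
    p ∈ ParetoSet S ↔ Minimal (· ∈ S) p := by
  simp only [ParetoSet, Set.mem_ofPred_eq, minimal_iff, Pi.le_def, eq_comm]

theorem Set.Finite.exists_mem_paretoSet_le {K : ℕ} {S : Set (Fin K → ℝ)} (hS : S.Finite)
    {p : Fin K → ℝ} (hp : p ∈ S) : ∃ p' ∈ ParetoSet S, p' ≤ p := by
  obtain ⟨p', hle, hmin⟩ := hS.isPWO.exists_le_minimal hp
  exact ⟨p', mem_paretoSet_iff_minimal.2 hmin, hle⟩

theorem epsInd_paretoSet {K : ℕ} {S : Set (Fin K → ℝ)} (hS : S.Finite) (Q : Set (Fin K → ℝ)) :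
    epsInd (ParetoSet S) Q = epsInd S Q := by
  unfold epsInd
  congr 1
  ext ε
  refine forall₂_congr fun q _ => ⟨fun ⟨p, hp, hε⟩ => ⟨p, hp.1, hε⟩, fun ⟨p, hp, hε⟩ => ?_⟩
  obtain ⟨p', hp', hle⟩ := hS.exists_mem_paretoSet_le hp
  exact ⟨p', hp', fun i => (sub_le_sub_right (hle i) _).trans (hε i)⟩

theorem isLeast_image_sup' {ι α β : Type*} [SemilatticeSup β] {t : Finset ι}
    (ht : t.Nonempty) {S : ι → Set α} {f : ι → α → β} {c : ι → β}
    (hc : ∀ j ∈ t, IsLeast (f j '' S j) (c j)) :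
    IsLeast ((fun s : ι → α => t.sup' ht fun j => f j (s j)) '' {s | ∀ j ∈ t, s j ∈ S j})
      (t.sup' ht c) := by
  refine ⟨?_, ?_⟩
  · have hattain : ∀ j ∈ t, ∃ a ∈ S j, f j a = c j := fun j hj => (hc j hj).1
    obtain ⟨a₀, -⟩ := hattain _ ht.choose_spec
    have : Nonempty α := ⟨a₀⟩
    choose! s hs hfs using hattain
    exact ⟨s, hs, sup'_congr ht rfl hfs⟩
  · rintro _ ⟨s, hs, rfl⟩
    exact sup'_mono_fun fun j hj => (hc j hj).2 ⟨s j, hs j hj, rfl⟩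

theorem isLeast_biUnion_inf' {ι β : Type*} [LinearOrder β] {t : Finset ι} (ht : t.Nonempty)
    {T : ι → Set β} {v : ι → β} (hv : ∀ i ∈ t, IsLeast (T i) (v i)) :
    IsLeast (⋃ i ∈ t, T i) (t.inf' ht v) := by
  refine ⟨?_, ?_⟩
  · obtain ⟨i, hi, hvi⟩ := exists_mem_eq_inf' ht v
    exact Set.mem_biUnion hi (hvi ▸ (hv i hi).1)
  · simp only [mem_lowerBounds, Set.mem_iUnion₂]
    rintro b ⟨i, hi, hb⟩
    exact (inf'_le v hi).trans ((hv i hi).2 hb)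

theorem Set.Finite.exists_isLeast_image {α β : Type*} [LinearOrder β] {s : Set α} (hs : s.Finite)
    (hne : s.Nonempty) (f : α → β) : ∃ m, IsLeast (f '' s) m := by
  obtain ⟨a, ha, hmin⟩ := s.exists_min_image f hs hne
  exact ⟨f a, Set.mem_image_of_mem f ha, Set.forall_mem_image.2 hmin⟩

theorem isLeast_epsInd {K : ℕ} (hK : (univ : Finset (Fin K)).Nonempty) {P Q : Set (Fin K → ℝ)}
    (hPf : P.Finite) (hP : P.Nonempty) (hQf : Q.Finite) (hQ : hQf.toFinset.Nonempty) :
    IsLeast ((fun σ : (Fin K → ℝ) → Fin K → ℝ =>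
        hQf.toFinset.sup' hQ fun q => univ.sup' hK fun i => σ q i - q i) '' {σ | ∀ q ∈ Q, σ q ∈ P})
      (epsInd P Q) := by
  choose c hc using fun q : Fin K → ℝ =>
    hPf.exists_isLeast_image hP fun p => univ.sup' hK fun i => p i - q i
  have hsel := isLeast_image_sup' hQ fun q _ => hc q
  simp only [Set.Finite.mem_toFinset] at hsel
  suffices IsLeast {ε : ℝ | ∀ q ∈ Q, ∃ p ∈ P, ∀ i, p i - q i ≤ ε} (hQf.toFinset.sup' hQ c) by
    rwa [epsInd, this.csInf_eq]
  refine ⟨?_, fun ε hε => sup'_le hQ c fun q hq => ?_⟩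
  · obtain ⟨σ, hσ, hσc⟩ := hsel.1
    refine fun q hq => ⟨σ q, hσ q hq, fun i => ?_⟩
    rw [← hσc]
    exact (le_sup' (fun i => σ q i - q i) (mem_univ i)).trans
      (le_sup' (fun q => univ.sup' hK fun i => σ q i - q i) (hQf.mem_toFinset.2 hq))
  · obtain ⟨p, hp, hpε⟩ := hε q (hQf.mem_toFinset.1 hq)
    exact (hc q).2 ⟨p, hp, rfl⟩ |>.trans (sup'_le hK _ fun i _ => hpε i)

/-- The robust flex-hand problem `min_{x} max_{ξ} I(ParetoSet (A x ξ), Q ξ)`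
equals (indeed, is the minimum of) the reformulated worst-case optimization
problem, minimizing over `x` and over families `s` choosing one achievable
point `s ξ q ∈ A x ξ` per scenario `ξ` and ideal Pareto point `q ∈ Q ξ`, the
value `max_{ξ} max_{q ∈ Q ξ} max_{i} (s ξ q i − q i)`. -/
theorem robust_flexHand_reformulation {K : ℕ} (hK : 1 ≤ K)
    (X U : Type*) [Fintype X] [Nonempty X] [Fintype U] [Nonempty U]
    (A : X → U → Set (Fin K → ℝ))
    (hAf : ∀ x ξ, (A x ξ).Finite) (hA : ∀ x ξ, (A x ξ).Nonempty)
    (Q : U → Set (Fin K → ℝ))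
    (hQf : ∀ ξ, (Q ξ).Finite) (hQne : ∀ ξ, (Q ξ).Nonempty) :
    IsLeast
      {ε : ℝ | ∃ x : X, ∃ s : U → (Fin K → ℝ) → (Fin K → ℝ),
        (∀ ξ, ∀ q ∈ Q ξ, s ξ q ∈ A x ξ) ∧
        ε = Finset.univ.sup' Finset.univ_nonempty fun ξ : U =>
              (hQf ξ).toFinset.sup' (by simpa using hQne ξ) fun q =>
                Finset.univ.sup' (Finset.univ_nonempty_iff.mpr ⟨⟨0, hK⟩⟩)
                  fun i : Fin K => s ξ q i - q i}
      (Finset.univ.inf' Finset.univ_nonempty fun x : X =>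
        Finset.univ.sup' Finset.univ_nonempty fun ξ : U =>
          epsInd (ParetoSet (A x ξ)) (Q ξ)) := by
  have hKne : (univ : Finset (Fin K)).Nonempty := univ_nonempty_iff.mpr ⟨⟨0, hK⟩⟩
  have hscenario : ∀ x ξ, IsLeast ((fun σ : (Fin K → ℝ) → Fin K → ℝ =>
      (hQf ξ).toFinset.sup' (by simpa using hQne ξ) fun q => univ.sup' hKne fun i => σ q i - q i) ''
        {σ | ∀ q ∈ Q ξ, σ q ∈ A x ξ}) (epsInd (ParetoSet (A x ξ)) (Q ξ)) := fun x ξ => by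
    rw [epsInd_paretoSet (hAf x ξ)]
    exact isLeast_epsInd hKne (hAf x ξ) (hA x ξ) (hQf ξ) _
  refine (congrArg (IsLeast · _) ?_).mp (isLeast_biUnion_inf' univ_nonempty
    fun x _ => isLeast_image_sup' univ_nonempty fun ξ _ => hscenario x ξ)
  ext ε
  simp only [Set.mem_ofPred_eq, Set.mem_iUnion, Set.mem_image, mem_univ, forall_const, exists_const]
  exact exists₂_congr fun x s => and_congr_right' eq_comm
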